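/- arXiv:1012.0278 — 4 statements merged into one kernel-verified Lean document; each statement's English description precedes it below -/
import Mathlib

section
/- Let Φ be an irreducible root system of rank at least 2 not of type G₂ (possibly non-reduced), and let A ∈ Φ be a positive root. Then there exists a root B ∈ Φ, not proportional to A, with B or −B simple, such that A + B ∈ Φ and A − B ∉ Φ. -/
open Finset RealInnerProductSpace

/-! Since `A` is an integer combination of simple roots, some simple root `α` has
`⟪A, α⟫ ≠ 0`; it can be chosen non-proportional to `A`, for otherwise `α` would be an isolated
node of the Dynkin diagram, and the roots would split into those proportional to `α` and those
orthogonal to it, against irreducibility. For `B = ±α` with `⟪A, B⟫ < 0` the Cartan integers of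
`A` and `B` multiply to less than `4`, so one of them is `-1` and a reflection gives `A + B`.
If `A - B` were a root, its Cartan integer along `B` would be `⟨A, B^∨⟩ - 2 ≤ -3`, forcing two
root lengths in ratio `3`, i.e. type `G₂`. -/

section InnerProduct

variable {E : Type*} [NormedAddCommGroup E] [InnerProductSpace ℝ E]

theorem real_inner_mul_inner_self_lt {x y : E} (hx : x ≠ 0) (hxy : ∀ t : ℝ, y ≠ t • x) :
    ⟪x, y⟫ * ⟪x, y⟫ < ⟪x, x⟫ * ⟪y, y⟫ := by
  have hy : y ≠ 0 := by simpa using hxy 0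
  have hlt : |⟪x, y⟫| < ‖x‖ * ‖y‖ := by
    refine (abs_real_inner_le_norm x y).lt_of_ne fun h => ?_
    obtain ⟨r, -, hr⟩ := (norm_inner_eq_norm_iff (𝕜 := ℝ) hx hy).mp h
    exact hxy r hr
  rw [← abs_mul_abs_self, real_inner_self_eq_norm_mul_norm, real_inner_self_eq_norm_mul_norm]
  nlinarith [abs_nonneg ⟪x, y⟫]

theorem cartan_mul_cartan_lt_four {x y : E} (hx : x ≠ 0) (hxy : ∀ t : ℝ, y ≠ t • x) {n m : ℤ}
    (hn : 2 * ⟪y, x⟫ = n * ⟪x, x⟫) (hm : 2 * ⟪x, y⟫ = m * ⟪y, y⟫) : n * m < 4 := by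
  have hy : y ≠ 0 := by simpa using hxy 0
  have hpos : 0 < ⟪x, x⟫ * ⟪y, y⟫ :=
    mul_pos (real_inner_self_pos.mpr hx) (real_inner_self_pos.mpr hy)
  have hprod : (n * m : ℝ) * (⟪x, x⟫ * ⟪y, y⟫) = 4 * (⟪x, y⟫ * ⟪x, y⟫) := by
    rw [real_inner_comm x y] at hn
    linear_combination (-(n * ⟪x, x⟫)) * hm - 2 * ⟪x, y⟫ * hn
  have : (n * m : ℝ) < 4 := by nlinarith [real_inner_mul_inner_self_lt hx hxy]
  exact_mod_cast this

end InnerProduct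

namespace RootSet

variable {E : Type*} [NormedAddCommGroup E] [InnerProductSpace ℝ E]

def IsReflectionStable (Φ : Set E) : Prop :=
  ∀ α ∈ Φ, ∀ β ∈ Φ, β - (2 * ⟪β, α⟫ / ⟪α, α⟫) • α ∈ Φ

def IsCrystallographic (Φ : Set E) : Prop :=
  ∀ α ∈ Φ, ∀ β ∈ Φ, ∃ n : ℤ, 2 * ⟪β, α⟫ = (n : ℝ) * ⟪α, α⟫

def IsIrreducible (Φ : Set E) : Prop :=
  ∀ Φ₁ Φ₂ : Set E, Φ = Φ₁ ∪ Φ₂ → (∀ α ∈ Φ₁, ∀ β ∈ Φ₂, ⟪α, β⟫ = 0) → Φ₁ = ∅ ∨ Φ₂ = ∅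

def HasSignedIntCoords (Φ : Set E) (Δ : Finset E) : Prop :=
  ∀ α ∈ Φ, ∃ c : E → ℤ, α = ∑ b ∈ Δ, (c b : ℝ) • b ∧
    ((∀ b ∈ Δ, 0 ≤ c b) ∨ (∀ b ∈ Δ, c b ≤ 0))

variable {Φ : Set E}

theorem neg_mem (h0 : (0 : E) ∉ Φ) (hrefl : IsReflectionStable Φ) {α : E} (hα : α ∈ Φ) :
    -α ∈ Φ := by
  have hα0 : ⟪α, α⟫ ≠ 0 := by simpa using fun h : α = 0 => h0 (h ▸ hα)
  have h := hrefl α hα α hα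
  rwa [mul_div_cancel_right₀ 2 hα0, two_smul, sub_add_cancel_left] at h

theorem add_mem_of_inner_neg (h0 : (0 : E) ∉ Φ) (hrefl : IsReflectionStable Φ)
    (hint : IsCrystallographic Φ) {α β : E} (hα : α ∈ Φ) (hβ : β ∈ Φ)
    (hαβ : ∀ t : ℝ, β ≠ t • α) (hneg : ⟪α, β⟫ < 0) : α + β ∈ Φ := by
  have hα0 : α ≠ 0 := fun h => h0 (h ▸ hα)
  have hβ0 : β ≠ 0 := by simpa using hαβ 0
  have hαα := real_inner_self_pos.mpr hα0
  have hββ := real_inner_self_pos.mpr hβ0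
  obtain ⟨n, hn⟩ := hint α hα β hβ
  obtain ⟨m, hm⟩ := hint β hβ α hα
  have hn0 : n < 0 := by
    have : (n : ℝ) < 0 := by rw [real_inner_comm] at hn; nlinarith
    exact_mod_cast this
  have hm0 : m < 0 := by
    have : (m : ℝ) < 0 := by nlinarith
    exact_mod_cast this
  have hnm := cartan_mul_cartan_lt_four hα0 hαβ hn hm
  obtain rfl | rfl : n = -1 ∨ m = -1 := by
    by_contra! h
    have : n ≤ -2 := by omega
    have : m ≤ -2 := by omega
    nlinarith
  · have hc : 2 * ⟪β, α⟫ / ⟪α, α⟫ = -1 := by rw [hn]; field_simp; norm_num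
    have h := hrefl α hα β hβ
    rwa [hc, neg_one_smul, sub_neg_eq_add, add_comm] at h
  · have hc : 2 * ⟪α, β⟫ / ⟪β, β⟫ = -1 := by rw [hm]; field_simp; norm_num
    have h := hrefl β hβ α hα
    rwa [hc, neg_one_smul, sub_neg_eq_add] at h

theorem sub_notMem_of_inner_neg (h0 : (0 : E) ∉ Φ) (hint : IsCrystallographic Φ)
    (hG2 : ¬ ∃ α ∈ Φ, ∃ β ∈ Φ, ⟪α, α⟫ = 3 * ⟪β, β⟫) {α β : E} (hα : α ∈ Φ) (hβ : β ∈ Φ)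
    (hαβ : ∀ t : ℝ, β ≠ t • α) (hneg : ⟪α, β⟫ < 0) : α - β ∉ Φ := by
  intro hγ
  have hα0 : α ≠ 0 := fun h => h0 (h ▸ hα)
  have hβ0 : β ≠ 0 := by simpa using hαβ 0
  have hββ := real_inner_self_pos.mpr hβ0
  have hγβ : ∀ t : ℝ, α - β ≠ t • β := by
    intro t ht
    have hα' : α = (1 + t) • β := by rw [add_smul, one_smul, ← ht]; abel
    have h1t : 1 + t ≠ 0 := by
      rintro h
      rw [h, zero_smul] at hα'
      exact hα0 hα'
    exact hαβ (1 + t)⁻¹ (by rw [hα', inv_smul_smul₀ h1t])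
  have hγγ := real_inner_self_pos.mpr (by simpa using hγβ 0)
  obtain ⟨k, hk⟩ := hint β hβ α hα
  obtain ⟨m, hm⟩ := hint (α - β) hγ β hβ
  have hk0 : k < 0 := by
    have : (k : ℝ) < 0 := by nlinarith
    exact_mod_cast this
  -- `α - β` would pair with `β` at Cartan integer `k - 2 ≤ -3`, which only `G₂` allows
  have hγk : 2 * ⟪α - β, β⟫ = ((k - 2 : ℤ) : ℝ) * ⟪β, β⟫ := by
    rw [inner_sub_left]; push_cast; linarith
  have hm0 : m < 0 := by
    have : (m : ℝ) < 0 := by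
      rw [real_inner_comm] at hm
      have : ((k - 2 : ℤ) : ℝ) < 0 := by exact_mod_cast (by omega : k - 2 < 0)
      nlinarith
    exact_mod_cast this
  have hkm := cartan_mul_cartan_lt_four hβ0 hγβ hγk hm
  obtain ⟨hk3, hm1⟩ : k - 2 = -3 ∧ m = -1 := by constructor <;> nlinarith
  rw [hk3] at hγk
  rw [hm1, real_inner_comm] at hm
  exact hG2 ⟨α - β, hγ, β, hβ, by push_cast at hγk hm; linarith⟩

variable {Δ : Finset E}

theorem coeff_eq_of_sum_smul_eq (hΔ : LinearIndependent ℝ (Subtype.val : Δ → E))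
    {f g : E → ℝ} (h : ∑ b ∈ Δ, f b • b = ∑ b ∈ Δ, g b • b) {b : E} (hb : b ∈ Δ) :
    f b = g b :=
  hΔ.eq_coords_of_eq (f := fun i => f i) (g := fun i => g i)
    (by simpa only [Finset.sum_coe_sort Δ fun b => f b • b, Finset.sum_coe_sort Δ fun b => g b • b]
      using h) ⟨b, hb⟩

theorem ne_smul_of_ne (hΔ : LinearIndependent ℝ (Subtype.val : Δ → E)) {a b : E}
    (ha : a ∈ Δ) (hb : b ∈ Δ) (hba : b ≠ a) (t : ℝ) : b ≠ t • a := by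
  have hΔ' : LinearIndepOn ℝ id (Δ : Set E) := hΔ
  have hpair : LinearIndepOn ℝ id {a, b} :=
    hΔ'.mono (by simp [Set.insert_subset_iff, ha, hb])
  exact fun h => (linearIndepOn_pair_iff id hba.symm (hΔ'.ne_zero ha)).mp hpair t h.symm

theorem exists_mem_inner_ne_zero_of_eq_sum {x : E} (hx : x ≠ 0) (f : E → ℝ)
    (h : x = ∑ b ∈ Δ, f b • b) : ∃ b ∈ Δ, ⟪x, b⟫ ≠ 0 := by
  by_contra! H
  have : ⟪x, x⟫ = 0 := by
    nth_rewrite 2 [h]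
    rw [inner_sum]
    exact Finset.sum_eq_zero fun b hb => by rw [real_inner_smul_right, H b hb, mul_zero]
  exact hx (inner_self_eq_zero.mp this)

theorem coeff_mul_coeff_nonneg (hbase : HasSignedIntCoords Φ Δ)
    (hΔ : LinearIndependent ℝ (Subtype.val : Δ → E)) {β : E} (hβ : β ∈ Φ) {f : E → ℝ}
    (hf : β = ∑ b ∈ Δ, f b • b) {a b : E} (ha : a ∈ Δ) (hb : b ∈ Δ) : 0 ≤ f a * f b := by
  obtain ⟨c, hc, hsign⟩ := hbase β hβ
  have hfc : ∀ x ∈ Δ, f x = c x := fun x hx => coeff_eq_of_sum_smul_eq hΔ (hf.symm.trans hc) hx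
  rw [hfc a ha, hfc b hb]
  rcases hsign with h | h
  · exact mul_nonneg (by exact_mod_cast h a ha) (by exact_mod_cast h b hb)
  · exact mul_nonneg_of_nonpos_of_nonpos (by exact_mod_cast h a ha) (by exact_mod_cast h b hb)

/-- Reflecting `β` in `a` changes only the `a`-coordinate, and flips its sign; so if `β` had
another nonzero coordinate, the reflected root would have coordinates of both signs. -/
theorem exists_eq_smul_of_orthogonal (hrefl : IsReflectionStable Φ)
    (hbase : HasSignedIntCoords Φ Δ) (hΔ : LinearIndependent ℝ (Subtype.val : Δ → E)) {a : E}
    (ha : a ∈ Δ) (haΦ : a ∈ Φ) (ha0 : a ≠ 0) (horth : ∀ b ∈ Δ, b ≠ a → ⟪a, b⟫ = 0)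
    {β : E} (hβ : β ∈ Φ) (hβa : ⟪β, a⟫ ≠ 0) : ∃ t : ℝ, β = t • a := by
  classical
  obtain ⟨c, hc, -⟩ := hbase β hβ
  have hinner : ⟪β, a⟫ = c a * ⟪a, a⟫ := by
    rw [hc, sum_inner, Finset.sum_eq_single a
      (fun b hb hba => by rw [real_inner_smul_left, real_inner_comm, horth b hb hba, mul_zero])
      (fun h => absurd ha h), real_inner_smul_left]
  have hca : (c a : ℝ) ≠ 0 := by
    rintro h
    rw [h, zero_mul] at hinner
    exact hβa hinner
  have hsβ : β - (2 * (c a : ℝ)) • a ∈ Φ := by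
    have haa : ⟪a, a⟫ ≠ 0 := (real_inner_self_pos.mpr ha0).ne'
    have hcoef : 2 * ⟪β, a⟫ / ⟪a, a⟫ = 2 * c a := by rw [hinner]; field_simp
    have h := hrefl a haΦ β hβ
    rwa [hcoef] at h
  have hsβ_eq : β - (2 * (c a : ℝ)) • a
      = ∑ b ∈ Δ, ((c b : ℝ) - if b = a then 2 * (c a : ℝ) else 0) • b := by
    simp only [sub_smul, ite_smul, zero_smul, Finset.sum_sub_distrib, Finset.sum_ite_eq',
      if_pos ha, ← hc]
  have hzero : ∀ b ∈ Δ, b ≠ a → (c b : ℝ) = 0 := by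
    intro b hb hba
    have h₁ := coeff_mul_coeff_nonneg (f := fun x => (c x : ℝ)) hbase hΔ hβ hc ha hb
    have h₂ := coeff_mul_coeff_nonneg hbase hΔ hsβ hsβ_eq ha hb
    simp only [if_true, if_neg hba, sub_zero] at h₂
    have : (c a : ℝ) * c b = 0 := by nlinarith
    exact (mul_eq_zero.mp this).resolve_left hca
  refine ⟨c a, ?_⟩
  rw [hc, Finset.sum_eq_single a (fun b hb hba => by rw [hzero b hb hba, zero_smul])
    (fun h => absurd ha h)]

theorem exists_inner_ne_zero_of_irreducible (h0 : (0 : E) ∉ Φ) (hrefl : IsReflectionStable Φ)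
    (hirred : IsIrreducible Φ) (hΔΦ : ↑Δ ⊆ Φ) (hΔ : LinearIndependent ℝ (Subtype.val : Δ → E))
    (hbase : HasSignedIntCoords Φ Δ) (hcard : 2 ≤ #Δ) {a : E} (ha : a ∈ Δ) :
    ∃ b ∈ Δ, b ≠ a ∧ ⟪a, b⟫ ≠ 0 := by
  by_contra! horth
  have ha0 : a ≠ 0 := fun h => h0 (h ▸ hΔΦ ha)
  obtain ⟨b, hb, hba⟩ := Finset.exists_mem_ne (by omega : 1 < #Δ) a
  have hsplit : Φ = {β ∈ Φ | ⟪β, a⟫ ≠ 0} ∪ {β ∈ Φ | ⟪β, a⟫ = 0} := by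
    ext β
    simp only [Set.mem_union, Set.mem_sep_iff]
    tauto
  have hperp : ∀ β ∈ {β ∈ Φ | ⟪β, a⟫ ≠ 0}, ∀ γ ∈ {β ∈ Φ | ⟪β, a⟫ = 0}, ⟪β, γ⟫ = 0 := by
    rintro β ⟨hβ, hβa⟩ γ ⟨-, hγa⟩
    obtain ⟨t, rfl⟩ := exists_eq_smul_of_orthogonal hrefl hbase hΔ ha (hΔΦ ha) ha0 horth hβ hβa
    rw [real_inner_smul_left, real_inner_comm, hγa, mul_zero]
  rcases hirred _ _ hsplit hperp with h | h
  · exact h.subset ⟨hΔΦ ha, (real_inner_self_pos.mpr ha0).ne'⟩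
  · exact h.subset ⟨hΔΦ hb, by rw [real_inner_comm]; exact horth b hb hba⟩

theorem exists_simple_not_proportional_inner_ne_zero (h0 : (0 : E) ∉ Φ)
    (hrefl : IsReflectionStable Φ) (hirred : IsIrreducible Φ) (hΔΦ : ↑Δ ⊆ Φ)
    (hΔ : LinearIndependent ℝ (Subtype.val : Δ → E))
    (hbase : HasSignedIntCoords Φ Δ) (hcard : 2 ≤ #Δ) {A : E} (hA : A ∈ Φ) :
    ∃ α ∈ Δ, (∀ t : ℝ, α ≠ t • A) ∧ ⟪A, α⟫ ≠ 0 := by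
  have hA0 : A ≠ 0 := fun h => h0 (h ▸ hA)
  obtain ⟨c, hc, -⟩ := hbase A hA
  obtain ⟨a, ha, hAa⟩ := exists_mem_inner_ne_zero_of_eq_sum hA0 _ hc
  by_cases hprop : ∀ t : ℝ, a ≠ t • A
  · exact ⟨a, ha, hprop, hAa⟩
  · obtain ⟨t, rfl⟩ := not_forall_not.mp hprop
    -- `t • A` is simple, so a simple root `b` joined to it in the Dynkin diagram will do
    obtain ⟨b, hb, hba, hab⟩ :=
      exists_inner_ne_zero_of_irreducible h0 hrefl hirred hΔΦ hΔ hbase hcard ha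
    have ht : t ≠ 0 := by
      rintro rfl
      exact h0 (by simpa using hΔΦ ha)
    refine ⟨b, hb, fun s hs => ne_smul_of_ne hΔ ha hb hba (s / t) ?_, ?_⟩
    · rw [hs, smul_smul, div_mul_cancel₀ s ht]
    · rw [real_inner_smul_left] at hab
      exact right_ne_zero_of_mul hab

end RootSet

theorem stmt_4_general {E : Type*} [NormedAddCommGroup E] [InnerProductSpace ℝ E]
    (Φ : Set E) (h0 : (0 : E) ∉ Φ)
    (hrefl : ∀ α ∈ Φ, ∀ β ∈ Φ, β - (2 * ⟪β, α⟫ / ⟪α, α⟫) • α ∈ Φ)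
    (hint : ∀ α ∈ Φ, ∀ β ∈ Φ, ∃ n : ℤ, 2 * ⟪β, α⟫ = (n : ℝ) * ⟪α, α⟫)
    (hirred : ∀ Φ₁ Φ₂ : Set E, Φ = Φ₁ ∪ Φ₂ →
      (∀ α ∈ Φ₁, ∀ β ∈ Φ₂, ⟪α, β⟫ = 0) → Φ₁ = ∅ ∨ Φ₂ = ∅)
    (hnotG2 : ¬ ∃ α ∈ Φ, ∃ β ∈ Φ, ⟪α, α⟫ = 3 * ⟪β, β⟫)
    (Δ : Finset E) (hΔΦ : ↑Δ ⊆ Φ)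
    (hΔindep : LinearIndependent ℝ (Subtype.val : {x : E // x ∈ Δ} → E))
    (hbase : ∀ α ∈ Φ, ∃ c : E → ℤ, α = ∑ b ∈ Δ, (c b : ℝ) • b ∧
      ((∀ b ∈ Δ, 0 ≤ c b) ∨ (∀ b ∈ Δ, c b ≤ 0)))
    (hrank : 2 ≤ Δ.card)
    (A : E) (hA : A ∈ Φ) :
    ∃ B ∈ Φ, (¬ ∃ q : ℚ, B = (q : ℝ) • A) ∧ (B ∈ Δ ∨ -B ∈ Δ) ∧
      A + B ∈ Φ ∧ A - B ∉ Φ := by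
  obtain ⟨α, hαΔ, hαA, hAα⟩ :=
    RootSet.exists_simple_not_proportional_inner_ne_zero h0 hrefl hirred hΔΦ hΔindep hbase hrank hA
  obtain ⟨B, hB, hBα, hAB⟩ : ∃ B ∈ Φ, (B = α ∨ B = -α) ∧ ⟪A, B⟫ < 0 := by
    rcases hAα.lt_or_gt with h | h
    · exact ⟨α, hΔΦ hαΔ, Or.inl rfl, h⟩
    · exact ⟨-α, RootSet.neg_mem h0 hrefl (hΔΦ hαΔ), Or.inr rfl, by rw [inner_neg_right]; linarith⟩
  have hBA : ∀ t : ℝ, B ≠ t • A := by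
    rcases hBα with rfl | rfl
    · exact hαA
    · exact fun t h => hαA (-t) (by rw [neg_smul, ← h, neg_neg])
  refine ⟨B, hB, fun ⟨q, hq⟩ => hBA q hq, ?_,
    RootSet.add_mem_of_inner_neg h0 hrefl hint hA hB hBA hAB,
    RootSet.sub_notMem_of_inner_neg h0 hint hnotG2 hA hB hBA hAB⟩
  rcases hBα with rfl | rfl
  · exact Or.inl hαΔ
  · exact Or.inr (by rwa [neg_neg])

/-- Let `Φ` be an irreducible (possibly non-reduced) root system of rank at least `2`,
not of type `G₂` (i.e. without roots whose squared lengths have ratio `3`), with a base `Δ`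
of simple roots, and let `A ∈ Φ` be a positive root. Then there exists a root `B ∈ Φ`,
not proportional to `A`, with `B` or `-B` simple, such that `A + B ∈ Φ` and `A - B ∉ Φ`. -/
theorem stmt_4 {E : Type*} [NormedAddCommGroup E] [InnerProductSpace ℝ E]
    [FiniteDimensional ℝ E]
    (Φ : Set E) (hfin : Φ.Finite) (h0 : (0 : E) ∉ Φ)
    (hspan : Submodule.span ℝ Φ = ⊤)
    (hrefl : ∀ α ∈ Φ, ∀ β ∈ Φ, β - (2 * ⟪β, α⟫ / ⟪α, α⟫) • α ∈ Φ)
    (hint : ∀ α ∈ Φ, ∀ β ∈ Φ, ∃ n : ℤ, 2 * ⟪β, α⟫ = (n : ℝ) * ⟪α, α⟫)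
    (hirred : ∀ Φ₁ Φ₂ : Set E, Φ = Φ₁ ∪ Φ₂ →
      (∀ α ∈ Φ₁, ∀ β ∈ Φ₂, ⟪α, β⟫ = 0) → Φ₁ = ∅ ∨ Φ₂ = ∅)
    (hnotG2 : ¬ ∃ α ∈ Φ, ∃ β ∈ Φ, ⟪α, α⟫ = 3 * ⟪β, β⟫)
    (Δ : Finset E) (hΔΦ : ↑Δ ⊆ Φ)
    (hΔindep : LinearIndependent ℝ (Subtype.val : {x : E // x ∈ Δ} → E))
    (hbase : ∀ α ∈ Φ, ∃ c : E → ℤ, α = ∑ b ∈ Δ, (c b : ℝ) • b ∧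
      ((∀ b ∈ Δ, 0 ≤ c b) ∨ (∀ b ∈ Δ, c b ≤ 0)))
    (hrank : 2 ≤ Δ.card)
    (A : E) (hA : A ∈ Φ)
    (hApos : ∃ c : E → ℤ, A = ∑ b ∈ Δ, (c b : ℝ) • b ∧ ∀ b ∈ Δ, 0 ≤ c b) :
    ∃ B ∈ Φ, (¬ ∃ q : ℚ, B = (q : ℝ) • A) ∧ (B ∈ Δ ∨ -B ∈ Δ) ∧
      A + B ∈ Φ ∧ A - B ∉ Φ :=
  stmt_4_general Φ h0 hrefl hint hirred hnotG2 Δ hΔΦ hΔindep hbase hrank A hA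
end

section
/- Let G be an isotropic reductive group over a local ring R with maximal ideal M, P a parabolic subgroup with opposite P⁻ and Levi L. For any u ∈ U_{P⁻}(M) and v ∈ U_P(R) there exist u′ ∈ U_{P⁻}(M), v′ ∈ U_P(R), and b ∈ L(R) such that u v = v′ b u′, where U_{P⁻}(M) denotes the kernel of reduction U_{P⁻}(R) → U_{P⁻}(R/M). -/
open scoped Pointwise

/-- Gauss decomposition `u v = v' b u'` over a local ring: `G = G(R)` with subgroups
`UP = U_P(R)`, `L = L(R)`, `Um = U_{P⁻}(R)`, reduction homomorphism `p : G(R) → G(R/M)`,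
and the big-cell property (an `R`-point whose reduction lies in the big cell over the
residue field lies in the big cell over `R`, with unique decomposition over the residue
field).  Then for `u ∈ U_{P⁻}(M) = U_{P⁻} ∩ ker p` and `v ∈ U_P(R)` there are
`v' ∈ U_P(R)`, `b ∈ L(R)`, `u' ∈ U_{P⁻}(M)` with `u * v = v' * b * u'`. -/
theorem stmt_8 {G Gbar : Type*} [Group G] [Group Gbar]
    (p : G →* Gbar)
    (UP L Um : Subgroup G) (UPbar Lbar Umbar : Subgroup Gbar)
    (hpUP : ∀ x ∈ UP, p x ∈ UPbar) (hpL : ∀ x ∈ L, p x ∈ Lbar)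
    (hpUm : ∀ x ∈ Um, p x ∈ Umbar)
    -- the big cell is a principal open subscheme: a point reducing into the big cell
    -- over the residue field already lies in the big cell over `R`
    (hlift : ∀ g : G, p g ∈ (UPbar : Set Gbar) * (Lbar : Set Gbar) * (Umbar : Set Gbar) →
      g ∈ (UP : Set G) * (L : Set G) * (Um : Set G))
    -- uniqueness of the big-cell decomposition over the residue field
    (huniq : ∀ x₁ ∈ UPbar, ∀ h₁ ∈ Lbar, ∀ y₁ ∈ Umbar, ∀ x₂ ∈ UPbar, ∀ h₂ ∈ Lbar,
      ∀ y₂ ∈ Umbar, x₁ * h₁ * y₁ = x₂ * h₂ * y₂ → x₁ = x₂ ∧ h₁ = h₂ ∧ y₁ = y₂)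
    (u v : G) (hu : u ∈ Um) (hu1 : p u = 1) (hv : v ∈ UP) :
    ∃ v' ∈ UP, ∃ b ∈ L, ∃ u' ∈ Um, p u' = 1 ∧ u * v = v' * b * u' := by
  have hmem : p (u * v) ∈ (UPbar : Set Gbar) * (Lbar : Set Gbar) * (Umbar : Set Gbar) := by
    have : p (u * v) = p v * 1 * 1 := by simp [map_mul, hu1]
    rw [this]
    exact Set.mul_mem_mul (Set.mul_mem_mul (hpUP v hv) Lbar.one_mem) Umbar.one_mem
  obtain ⟨_, ⟨v', hv', b, hb, rfl⟩, u', hu', heq⟩ := hlift (u * v) hmem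
  refine ⟨v', hv', b, hb, u', hu', ?_, heq.symm⟩
  have hpv : p (u * v) = p v * 1 * 1 := by simp [map_mul, hu1]
  have := huniq (p v) (hpUP v hv) 1 Lbar.one_mem 1 Umbar.one_mem
    (p v') (hpUP v' hv') (p b) (hpL b hb) (p u') (hpUm u' hu')
    (by rw [← hpv, ← heq]; simp [map_mul, mul_assoc])
  exact this.2.2.symm
end

section
/- Let G be a split simply connected or adjoint Chevalley group over a field k of rank at least 2 (e.g. SL_n, n ≥ 3). If g ∈ G(k) commutes with x_α(1) for every root α, then g lies in the center of G(k). Concretely for SL_n(k), n ≥ 3: if g ∈ SL_n(k) commutes with all elementary transvections e_{ij}(1) = 1 + E_{ij}, i ≠ j, then g is a scalar matrix. -/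
lemma aux_comm (k : Type*) [Field k] (n : ℕ)
    (g : Matrix (Fin n) (Fin n) k) (i j : Fin n) (hij : i ≠ j)
    (h : g * Matrix.transvection i j 1 = Matrix.transvection i j 1 * g) :
    g * Matrix.single i j 1 = Matrix.single i j 1 * g := by
  have := h
  simp only [Matrix.transvection, mul_add, add_mul, mul_one, one_mul] at this
  exact add_left_cancel this

/-- If `g ∈ SL_n(k)`, `n ≥ 3`, over a field `k` commutes with all elementary transvections
`e_{ij}(1) = 1 + E_{ij}` (`i ≠ j`), then `g` lies in the center of `SL_n(k)`; concretely,
`g` is a scalar matrix. -/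
theorem stmt_11 (k : Type*) [Field k] (n : ℕ) (hn : 3 ≤ n)
    (g : Matrix.SpecialLinearGroup (Fin n) k)
    (hcomm : ∀ i j : Fin n, i ≠ j →
      (g : Matrix (Fin n) (Fin n) k) * Matrix.transvection i j 1 =
        Matrix.transvection i j 1 * (g : Matrix (Fin n) (Fin n) k)) :
    g ∈ Subgroup.center (Matrix.SpecialLinearGroup (Fin n) k) ∧
      ∃ c : k, (g : Matrix (Fin n) (Fin n) k) = c • (1 : Matrix (Fin n) (Fin n) k) := by
  have h3 : 0 < n := by omega
  -- key: entries
  have key : ∀ (i j a b : Fin n), i ≠ j →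
      (g : Matrix (Fin n) (Fin n) k) a i * (if j = b then 1 else 0) =
      (if i = a then 1 else 0) * (g : Matrix (Fin n) (Fin n) k) j b := by
    intro i j a b hij
    have h := aux_comm k n g i j hij (hcomm i j hij)
    have := congrFun (congrFun h a) b
    simpa [Matrix.mul_apply, Matrix.single, ite_and, Finset.sum_ite_eq,
      Finset.sum_ite_eq'] using this
  have hoff : ∀ a i : Fin n, a ≠ i → (g : Matrix (Fin n) (Fin n) k) a i = 0 := by
    intro a i hai
    -- pick j ≠ i; then g a i = δ_{a i} g j j at b = j
    obtain ⟨j, hj1, hj2⟩ : ∃ j : Fin n, j ≠ i ∧ j ≠ a := by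
      have hcard : ({i, a} : Finset (Fin n)).card < n := by
        calc ({i, a} : Finset (Fin n)).card ≤ 2 := Finset.card_insert_le _ _ |>.trans (by simp)
        _ < n := by omega
      have : (({i, a} : Finset (Fin n))ᶜ).Nonempty := by
        rw [← Finset.card_pos, Finset.card_compl]
        simp only [Fintype.card_fin]
        omega
      obtain ⟨j, hj⟩ := this
      simp only [Finset.mem_compl, Finset.mem_insert, Finset.mem_singleton, not_or] at hj
      exact ⟨j, hj.1, hj.2⟩
    have := key i j a j (fun h => hj1 h.symm)
    simpa [Ne.symm hai] using this
  have hdiag : ∀ i j : Fin n, (g : Matrix (Fin n) (Fin n) k) i i = (g : Matrix (Fin n) (Fin n) k) j j := by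
    intro i j
    rcases eq_or_ne i j with rfl | hij
    · rfl
    · have := key i j i j hij
      simpa using this
  set c := (g : Matrix (Fin n) (Fin n) k) ⟨0, h3⟩ ⟨0, h3⟩ with hc
  have hscalar : (g : Matrix (Fin n) (Fin n) k) = c • (1 : Matrix (Fin n) (Fin n) k) := by
    ext a b
    rcases eq_or_ne a b with rfl | hab
    · simpa [Matrix.one_apply] using hdiag a ⟨0, h3⟩
    · simp [Matrix.one_apply, hab, hoff a b hab]
  refine ⟨?_, c, hscalar⟩
  rw [Subgroup.mem_center_iff]
  intro h
  ext a b
  show ((h : Matrix (Fin n) (Fin n) k) * g) a b = ((g : Matrix (Fin n) (Fin n) k) * h) a b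
  rw [hscalar]
  simp [Matrix.smul_mul, Matrix.mul_smul]
end

section
/- Let R be a local ring with maximal ideal M, and n ≥ 3. If g ∈ GL_n(R) can be written g = x h y with x strictly upper triangular with off-diagonal entries in M, h block-diagonal (diagonal), and y strictly lower triangular with entries in M, and g commutes with all elementary matrices e_{ij}(1), then x = y = 1, i.e. g is diagonal. -/
/-!
Commuting with `e_{ij}(1)` forces `(g e_{ij}(1))_{jj} = g_{jj} + g_{ji}` to equal
`(e_{ij}(1) g)_{jj} = g_{jj}`, so `g` is diagonal. Then `y = (xh)⁻¹ g` is upper triangular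
(inverses and products of upper triangular matrices are upper triangular) as well as lower
triangular, hence diagonal with unit diagonal, i.e. `y = 1`; symmetrically `x = g (hy)⁻¹ = 1`.
-/

namespace Matrix

section Order

variable {m R : Type*} [LinearOrder m] [Zero R]

theorem BlockTriangular.isDiag_of_toDual {A : Matrix m m R} (hU : A.BlockTriangular id)
    (hL : A.BlockTriangular OrderDual.toDual) : A.IsDiag := by
  intro i j hij
  rcases hij.lt_or_gt with hij | hij
  · exact hL hij
  · exact hU hij

end Order

section DecidableEq

variable {m R : Type*} [DecidableEq m]

theorem IsDiag.eq_one [Zero R] [One R] {A : Matrix m m R} (hA : A.IsDiag)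
    (hdiag : ∀ i, A i i = 1) : A = 1 := by
  ext i j
  obtain rfl | hij := eq_or_ne i j
  · simp [hdiag]
  · simp [hA hij, hij]

theorem IsDiag.blockTriangular {α : Type*} [Preorder α] [Zero R] {A : Matrix m m R}
    (hA : A.IsDiag) (b : m → α) : A.BlockTriangular b := by
  rw [← (isDiag_iff_diagonal_diag A).mp hA]
  exact blockTriangular_diagonal _

variable [Fintype m] [CommRing R]

theorem isDiag_of_mul_transvection_comm {A : Matrix m m R}
    (hA : ∀ i j, i ≠ j → A * transvection i j 1 = transvection i j 1 * A) : A.IsDiag := by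
  intro k i hki
  have hkk := congrFun (congrFun (hA i k hki.symm) k) k
  simpa [transvection, Matrix.mul_add, Matrix.add_mul, single_mul_apply_of_ne (h := hki)]
    using hkk

variable {α : Type*} [LinearOrder α] {b : m → α}

theorem BlockTriangular.of_mul_left {A B : Matrix m m R} (hA : A.BlockTriangular b)
    (hdet : IsUnit A.det) (hAB : (A * B).BlockTriangular b) : B.BlockTriangular b := by
  have := A.invertibleOfIsUnitDet hdet
  rw [← nonsing_inv_mul_cancel_left A B hdet]
  exact (blockTriangular_inv_of_blockTriangular hA).mul hAB

theorem BlockTriangular.of_mul_right {A B : Matrix m m R} (hB : B.BlockTriangular b)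
    (hdet : IsUnit B.det) (hAB : (A * B).BlockTriangular b) : A.BlockTriangular b := by
  have := B.invertibleOfIsUnitDet hdet
  rw [← mul_nonsing_inv_cancel_right B A hdet]
  exact hAB.mul (blockTriangular_inv_of_blockTriangular hB)

end DecidableEq

variable {m R : Type*} [Fintype m] [DecidableEq m] [LinearOrder m] [CommRing R]

theorem unitriangular_eq_one_of_isDiag_mul_mul {x h y : Matrix m m R}
    (hx : x.BlockTriangular id) (hxdiag : ∀ i, x i i = 1) (hh : h.IsDiag)
    (hy : y.BlockTriangular OrderDual.toDual) (hydiag : ∀ i, y i i = 1)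
    (hdet : IsUnit (x * h * y).det) (hg : (x * h * y).IsDiag) : x = 1 ∧ y = 1 := by
  have hxh : IsUnit (x * h).det := isUnit_of_mul_isUnit_left (by rwa [← det_mul])
  have hhy : IsUnit (h * y).det :=
    isUnit_of_mul_isUnit_right (by rwa [← det_mul, ← Matrix.mul_assoc])
  have hyU : y.BlockTriangular id :=
    (hx.mul (hh.blockTriangular id)).of_mul_left hxh (hg.blockTriangular id)
  have hxL : x.BlockTriangular OrderDual.toDual :=
    ((hh.blockTriangular _).mul hy).of_mul_right hhy
      (by rw [← Matrix.mul_assoc]; exact hg.blockTriangular _)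
  exact ⟨(hx.isDiag_of_toDual hxL).eq_one hxdiag, (hyU.isDiag_of_toDual hy).eq_one hydiag⟩

end Matrix

theorem stmt_17_general (R : Type*) [CommRing R] (n : ℕ)
    (x h y : Matrix (Fin n) (Fin n) R)
    (hxdiag : ∀ i, x i i = 1) (hxlow : ∀ i j : Fin n, j < i → x i j = 0)
    (hh : ∀ i j : Fin n, i ≠ j → h i j = 0)
    (hydiag : ∀ i, y i i = 1) (hyup : ∀ i j : Fin n, i < j → y i j = 0)
    (hunit : IsUnit (x * h * y).det)
    (hcomm : ∀ i j : Fin n, i ≠ j →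
      (x * h * y) * Matrix.transvection i j 1 = Matrix.transvection i j 1 * (x * h * y)) :
    x = 1 ∧ y = 1 :=
  Matrix.unitriangular_eq_one_of_isDiag_mul_mul (fun i j hij => hxlow i j hij) hxdiag
    (fun i j hij => hh i j hij) (fun i j hij => hyup i j hij) hydiag hunit
    (Matrix.isDiag_of_mul_transvection_comm hcomm)

/-- Over a local ring `R` with maximal ideal `M` and `n ≥ 3`: if `g ∈ GL_n(R)` is written
`g = x h y` with `x` unipotent upper triangular with off-diagonal entries in `M`, `h`
diagonal, and `y` unipotent lower triangular with off-diagonal entries in `M`, and `g`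
commutes with all elementary matrices `e_{ij}(1)`, then `x = y = 1`, i.e. `g` is
diagonal. -/
theorem stmt_17 (R : Type*) [CommRing R] [IsLocalRing R] (n : ℕ) (hn : 3 ≤ n)
    (x h y : Matrix (Fin n) (Fin n) R)
    (hxdiag : ∀ i, x i i = 1) (hxlow : ∀ i j : Fin n, j < i → x i j = 0)
    (hxM : ∀ i j : Fin n, i < j → x i j ∈ IsLocalRing.maximalIdeal R)
    (hh : ∀ i j : Fin n, i ≠ j → h i j = 0)
    (hydiag : ∀ i, y i i = 1) (hyup : ∀ i j : Fin n, i < j → y i j = 0)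
    (hyM : ∀ i j : Fin n, j < i → y i j ∈ IsLocalRing.maximalIdeal R)
    (hunit : IsUnit (x * h * y).det)
    (hcomm : ∀ i j : Fin n, i ≠ j →
      (x * h * y) * Matrix.transvection i j 1 = Matrix.transvection i j 1 * (x * h * y)) :
    x = 1 ∧ y = 1 :=
  stmt_17_general R n x h y hxdiag hxlow hh hydiag hyup hunit hcomm
end
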